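/- Let C ⊑ D be a PL subsumption that is elementary with respect to K and O, with C ≠ ⊥, and let (I,d) be the canonical model of C. Then the oracle structural subsumption algorithm satisfies: STS^{O_K^+}(C ⊑ D) = true if and only if d ∈ D^I. -/

import Mathlib

/-! Core formalization of the policy logic `PL` of Bonatti et al.,
    "Machine Understandable Policies and GDPR Compliance Checking". -/

namespace PLPaper

/-- Simple `PL` concepts: `C ::= A | ⊥ | ∃f.[l,u] | ∃R.C | C ⊓ C`. -/
inductive SPL : Type
  | atom  : ℕ → SPL
  | bot   : SPL
  | ival  : ℕ → ℤ → ℤ → SPL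
  | ex    : ℕ → SPL → SPL
  | inter : SPL → SPL → SPL
  deriving DecidableEq

/-- A full `PL` concept: a union `C₁ ⊔ … ⊔ Cₙ` of simple concepts, given as a list. -/
abbrev PLC := List SPL

/-- Axioms of a `PL` knowledge base. -/
inductive PLAx : Type
  | funcRole : ℕ → PLAx              -- func(R), R a role name
  | funcProp : ℕ → PLAx              -- func(f), f a concrete property
  | rangeAx  : ℕ → ℕ → PLAx          -- range(R, A)
  | incl     : ℕ → ℕ → PLAx          -- A ⊑ B
  | disj     : ℕ → ℕ → PLAx          -- disj(A, B)
  deriving DecidableEq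

/-- A description-logic interpretation (concept names, role names, concrete properties). -/
structure Interp : Type 1 where
  Δ : Type
  nonempty : Nonempty Δ
  conc : ℕ → Set Δ
  role : ℕ → Set (Δ × Δ)
  cprop : ℕ → Set (Δ × ℤ)

/-- Semantics of simple `PL` concepts. -/
def SPL.sem (I : Interp) : SPL → Set I.Δ
  | .atom a => I.conc a
  | .bot => ∅
  | .ival f l u => {d | ∃ i : ℤ, l ≤ i ∧ i ≤ u ∧ (d, i) ∈ I.cprop f}
  | .ex r c => {d | ∃ e, (d, e) ∈ I.role r ∧ e ∈ c.sem I}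
  | .inter c d => c.sem I ∩ d.sem I

/-- Semantics of full `PL` concepts (finite unions). -/
def semL (I : Interp) (C : PLC) : Set I.Δ := {d | ∃ c ∈ C, d ∈ c.sem I}

/-- Satisfaction of a `PL` axiom. -/
def Interp.satAx (I : Interp) : PLAx → Prop
  | .funcRole r => ∀ ⦃d e e'⦄, (d, e) ∈ I.role r → (d, e') ∈ I.role r → e = e'
  | .funcProp f => ∀ ⦃d i j⦄, (d, i) ∈ I.cprop f → (d, j) ∈ I.cprop f → i = j
  | .rangeAx r a => ∀ ⦃d e⦄, (d, e) ∈ I.role r → e ∈ I.conc a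
  | .incl a b => I.conc a ⊆ I.conc b
  | .disj a b => I.conc a ∩ I.conc b = ∅

def Interp.satKB (I : Interp) (K : Set PLAx) : Prop := ∀ ax ∈ K, I.satAx ax

/-- `K ⊨ C ⊑ D` for full `PL` concepts. -/
def Entails (K : Set PLAx) (C D : PLC) : Prop :=
  ∀ I : Interp, I.satKB K → semL I C ⊆ semL I D

/-- The multiset of conjuncts of a simple concept (intersections treated as sets:
    ordering and parenthesization of conjuncts is irrelevant). -/
def SPL.conj : SPL → Multiset SPL
  | .inter c d => c.conj + d.conj
  | c => {c}

/-- `⊑*`: the reflexive–transitive closure of the atomic inclusions of `K`. -/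
def SubStar (K : Set PLAx) : ℕ → ℕ → Prop :=
  Relation.ReflTransGen fun a b => PLAx.incl a b ∈ K

/-- One application of one of the seven normalization rules w.r.t. `K` (Table 3);
    intersections are treated as sets of conjuncts, and rules may be applied to
    subconcepts (congruence). -/
inductive Rw (K : Set PLAx) : SPL → SPL → Prop
  /-- rule 1: `⊥ ⊓ D ⇝ ⊥` -/
  | botConj (C : SPL) :
      SPL.bot ∈ C.conj → C ≠ SPL.bot → Rw K C SPL.bot
  /-- rule 2: `∃R.⊥ ⇝ ⊥` -/
  | exBot (r : ℕ) : Rw K (SPL.ex r SPL.bot) SPL.bot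
  /-- rule 3: `∃f.[l,u] ⇝ ⊥` if `l > u` -/
  | emptyIval (f : ℕ) (l u : ℤ) : u < l → Rw K (SPL.ival f l u) SPL.bot
  /-- rule 4: merge existential restrictions over a functional role -/
  | funcRole (C C' : SPL) (r : ℕ) (D D' : SPL) (rest : Multiset SPL) :
      PLAx.funcRole r ∈ K →
      C.conj = {SPL.ex r D, SPL.ex r D'} + rest →
      C'.conj = {SPL.ex r (SPL.inter D D')} + rest →
      Rw K C C'
  /-- rule 5: merge interval constraints over a functional concrete property -/
  | funcProp (C C' : SPL) (f : ℕ) (l₁ u₁ l₂ u₂ : ℤ) (rest : Multiset SPL) :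
      PLAx.funcProp f ∈ K →
      C.conj = {SPL.ival f l₁ u₁, SPL.ival f l₂ u₂} + rest →
      C'.conj = {SPL.ival f (max l₁ l₂) (min u₁ u₂)} + rest →
      Rw K C C'
  /-- rule 6: add range information -/
  | rangeRule (C C' : SPL) (r a : ℕ) (D : SPL) (rest : Multiset SPL) :
      PLAx.rangeAx r a ∈ K →
      SPL.atom a ∉ D.conj → SPL.bot ∉ D.conj →
      C.conj = {SPL.ex r D} + rest →
      C'.conj = {SPL.ex r (SPL.inter D (SPL.atom a))} + rest →
      Rw K C C'
  /-- rule 7: disjointness clash -/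
  | disjRule (C : SPL) (a₁ a₂ b₁ b₂ : ℕ) :
      SPL.atom a₁ ∈ C.conj → SPL.atom a₂ ∈ C.conj →
      SubStar K a₁ b₁ → SubStar K a₂ b₂ →
      PLAx.disj b₁ b₂ ∈ K →
      Rw K C SPL.bot
  /-- rules may be applied inside existential restrictions -/
  | exCongr (r : ℕ) (c c' : SPL) : Rw K c c' → Rw K (SPL.ex r c) (SPL.ex r c')
  /-- rules may be applied to one conjunct of an intersection -/
  | interCongr (C C' c c' : SPL) (rest : Multiset SPL) :
      Rw K c c' →
      C.conj = {c} + rest → C'.conj = {c'} + rest →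
      Rw K C C'

/-- A simple concept is normalized w.r.t. `K` when no rule is applicable. -/
def Normalized (K : Set PLAx) (C : SPL) : Prop := ¬ ∃ C', Rw K C C'

/-- All interval constraints `∃f.[l,u]` occurring (at any depth) in a simple concept. -/
def SPL.ivalsOf : SPL → List (ℕ × ℤ × ℤ)
  | .ival f l u => [(f, l, u)]
  | .ex _ c => c.ivalsOf
  | .inter c d => c.ivalsOf ++ d.ivalsOf
  | _ => []

def ivalsL (C : PLC) : List (ℕ × ℤ × ℤ) := C.flatMap SPL.ivalsOf

/-- The integers occurring as interval endpoints in a full concept. -/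
def endpointsL (D : PLC) : List ℤ := (ivalsL D).flatMap fun t => [t.2.1, t.2.2]

/-- A subsumption `C ⊑ D` is interval safe iff every interval of `C` is either
    contained in, or disjoint from, every interval of `D`. -/
def IntervalSafe (C D : PLC) : Prop :=
  ∀ p ∈ ivalsL C, ∀ q ∈ ivalsL D,
    Set.Icc p.2.1 p.2.2 ⊆ Set.Icc q.2.1 q.2.2 ∨
      Set.Icc p.2.1 p.2.2 ∩ Set.Icc q.2.1 q.2.2 = ∅

/-- Given the ascending chain `x₀ < x₁ < … < x_{r+1}` of cut points, produce the
    subinterval constraints `[xᵢ,xᵢ]`, `[xᵢ+1, xᵢ₊₁-1]`, …, `[x_{r+1},x_{r+1}]`. -/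
def chainPieces (f : ℕ) : List ℤ → List SPL
  | [] => []
  | [x] => [SPL.ival f x x]
  | x :: y :: rest =>
      SPL.ival f x x :: SPL.ival f (x + 1) (y - 1) :: chainPieces f (y :: rest)

/-- The endpoints of `D` lying in `[l,u]`, sorted in increasing order, without duplicates. -/
def cutPoints (E : List ℤ) (l u : ℤ) : List ℤ :=
  ((E.filter fun x => decide (l ≤ x ∧ x ≤ u)).toFinset).sort (· ≤ ·)

/-- Interval splitting of a single constraint `∃f.[l,u]` w.r.t. the endpoints `E`. -/
def splitIval (E : List ℤ) (f : ℕ) (l u : ℤ) : List SPL :=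
  chainPieces f (l :: (cutPoints E l u ++ [u]))

/-- Interval normalization of a simple concept w.r.t. endpoints `E`: replace each
    interval constraint by the union of its pieces and lift unions to the top level
    (distributivity of `⊓` over `⊔` and `∃R.(C₁ ⊔ C₂) ≡ ∃R.C₁ ⊔ ∃R.C₂`). -/
def SPL.splitC (E : List ℤ) : SPL → List SPL
  | .atom a => [.atom a]
  | .bot => [.bot]
  | .ival f l u => splitIval E f l u
  | .ex r c => (c.splitC E).map (SPL.ex r)
  | .inter c d => (c.splitC E).flatMap fun c' => (d.splitC E).map fun d' => SPL.inter c' d'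

/-- `split(C, D)` for full `PL` concepts. -/
def splitL (C D : PLC) : PLC := C.flatMap (SPL.splitC (endpointsL D))

/-- Size of (the encoding of) a simple concept. -/
def SPL.size : SPL → ℕ
  | .atom _ => 1
  | .bot => 1
  | .ival _ _ _ => 1
  | .ex _ c => c.size + 1
  | .inter c d => c.size + d.size + 1

/-- Size of a full concept. -/
def sizeL (C : PLC) : ℕ := (C.map SPL.size).sum + 1

/-- The structural subsumption algorithm `STS` (Algorithm 1): `STS K C D` holds
    iff the algorithm returns `true` on the elementary subsumption `C ⊑ D`. -/
inductive STS (K : Set PLAx) : SPL → SPL → Prop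
  | botCase (D : SPL) : STS K SPL.bot D
  | atomCase (C : SPL) (a a' : ℕ) :
      SPL.atom a' ∈ C.conj → SubStar K a' a → STS K C (SPL.atom a)
  | ivalCase (C : SPL) (f : ℕ) (l u l' u' : ℤ) :
      SPL.ival f l' u' ∈ C.conj → l ≤ l' → u' ≤ u → STS K C (SPL.ival f l u)
  | exCase (C C' D' : SPL) (r : ℕ) :
      SPL.ex r C' ∈ C.conj → STS K C' D' → STS K C (SPL.ex r D')
  | interCase (C D' D'' : SPL) :
      STS K C D' → STS K C D'' → STS K C (SPL.inter D' D'')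

/-- Pointwise exhaustive normalization of the disjuncts of a full concept. -/
def RwL (K : Set PLAx) (C C' : PLC) : Prop :=
  List.Forall₂ (Relation.ReflTransGen (Rw K)) C C'

/-- `PLR(K, C ⊑ D) = true` (Algorithm 2): normalize `C` exhaustively with the seven
    rules, split intervals w.r.t. `D`, and check every resulting disjunct against
    some disjunct of `D` with `STS`. -/
def PLRaccept (K : Set PLAx) (C D : PLC) : Prop :=
  ∃ C' : PLC, RwL K C C' ∧ (∀ c ∈ C', Normalized K c) ∧
    ∀ c ∈ splitL C' D, ∃ d ∈ D, STS K c d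

/-! ### Signatures -/

def SPL.rNames : SPL → Set ℕ
  | .ex r c => insert r c.rNames
  | .inter c d => c.rNames ∪ d.rNames
  | _ => ∅

def SPL.cNames : SPL → Set ℕ
  | .atom a => {a}
  | .ex _ c => c.cNames
  | .inter c d => c.cNames ∪ d.cNames
  | _ => ∅

def rNamesL (C : PLC) : Set ℕ := {n | ∃ c ∈ C, n ∈ SPL.rNames c}
def cNamesL (C : PLC) : Set ℕ := {n | ∃ c ∈ C, n ∈ SPL.cNames c}

def PLAx.rNames : PLAx → Set ℕ
  | .funcRole r => {r}
  | .rangeAx r _ => {r}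
  | _ => ∅

def PLAx.cNames : PLAx → Set ℕ
  | .rangeAx _ a => {a}
  | .incl a b => {a, b}
  | .disj a b => {a, b}
  | _ => ∅

def rNamesPL (K : Set PLAx) : Set ℕ := {n | ∃ ax ∈ K, n ∈ PLAx.rNames ax}
def cNamesPL (K : Set PLAx) : Set ℕ := {n | ∃ ax ∈ K, n ∈ PLAx.cNames ax}

/-! ### Horn-SRIQ oracles -/

/-- SRIQ roles: role names and their inverses. -/
inductive HRole : Type
  | name : ℕ → HRole
  | inv  : ℕ → HRole
  deriving DecidableEq

/-- The concepts allowed in normal-form Horn-SRIQ axioms: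
    concept names, `⊤`, `⊥`, and `∃S.Self`. -/
inductive HAtom : Type
  | name : ℕ → HAtom
  | top  : HAtom
  | bot  : HAtom
  | self : HRole → HAtom
  deriving DecidableEq

/-- Horn-SRIQ axioms in normal form (Table 2), plus role axioms. -/
inductive HAx : Type
  | sub2    : HAtom → HAtom → HAtom → HAx      -- C₁ ⊓ C₂ ⊑ D
  | subEx   : HRole → HAtom → HAtom → HAx      -- ∃R.C ⊑ D
  | subAll  : HAtom → HRole → HAtom → HAx      -- C ⊑ ∀R.D
  | subToEx : HAtom → HRole → HAtom → HAx      -- C ⊑ ∃R.D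
  | atMost1 : HAtom → HRole → HAtom → HAx      -- C ⊑ ≤1 S.D
  | atLeast : HAtom → ℕ → HRole → HAtom → HAx  -- C ⊑ ≥n S.D
  | rIncl   : List HRole → HRole → HAx         -- R₁ ∘ … ∘ Rₙ ⊑ R
  | rDisj   : HRole → HRole → HAx              -- disj(S₁, S₂)

def HRole.sem (I : Interp) : HRole → Set (I.Δ × I.Δ)
  | .name r => I.role r
  | .inv r => {p | (p.2, p.1) ∈ I.role r}

def HAtom.sem (I : Interp) : HAtom → Set I.Δ
  | .name a => I.conc a
  | .top => Set.univ
  | .bot => ∅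
  | .self s => {d | (d, d) ∈ s.sem I}

def HRole.semChain (I : Interp) : List HRole → Set (I.Δ × I.Δ)
  | [] => {p | p.1 = p.2}
  | r :: rest => {p | ∃ z, (p.1, z) ∈ r.sem I ∧ (z, p.2) ∈ HRole.semChain I rest}

def Interp.satHAx (I : Interp) : HAx → Prop
  | .sub2 c₁ c₂ d => c₁.sem I ∩ c₂.sem I ⊆ d.sem I
  | .subEx r c d => {x | ∃ y, (x, y) ∈ r.sem I ∧ y ∈ c.sem I} ⊆ d.sem I
  | .subAll c r d => ∀ ⦃x y⦄, x ∈ c.sem I → (x, y) ∈ r.sem I → y ∈ d.sem I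
  | .subToEx c r d => ∀ ⦃x⦄, x ∈ c.sem I → ∃ y, (x, y) ∈ r.sem I ∧ y ∈ d.sem I
  | .atMost1 c s d => ∀ ⦃x y z⦄, x ∈ c.sem I → (x, y) ∈ s.sem I → y ∈ d.sem I →
      (x, z) ∈ s.sem I → z ∈ d.sem I → y = z
  | .atLeast c n s d => ∀ ⦃x⦄, x ∈ c.sem I →
      ∃ t : Finset I.Δ, n ≤ t.card ∧ ∀ y ∈ t, (x, y) ∈ s.sem I ∧ y ∈ d.sem I
  | .rIncl rs r => HRole.semChain I rs ⊆ r.sem I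
  | .rDisj s₁ s₂ => s₁.sem I ∩ s₂.sem I = ∅

def Interp.satHKB (I : Interp) (O : Set HAx) : Prop := ∀ ax ∈ O, I.satHAx ax

def HRole.base : HRole → ℕ
  | .name r => r
  | .inv r => r

def HAtom.cNames : HAtom → Set ℕ
  | .name a => {a}
  | _ => ∅

def HAtom.rNames : HAtom → Set ℕ
  | .self s => {s.base}
  | _ => ∅

def HAx.cNames : HAx → Set ℕ
  | .sub2 c₁ c₂ d => c₁.cNames ∪ c₂.cNames ∪ d.cNames
  | .subEx _ c d => c.cNames ∪ d.cNames
  | .subAll c _ d => c.cNames ∪ d.cNames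
  | .subToEx c _ d => c.cNames ∪ d.cNames
  | .atMost1 c _ d => c.cNames ∪ d.cNames
  | .atLeast c _ _ d => c.cNames ∪ d.cNames
  | .rIncl _ _ => ∅
  | .rDisj _ _ => ∅

def HAx.rNames : HAx → Set ℕ
  | .sub2 c₁ c₂ d => c₁.rNames ∪ c₂.rNames ∪ d.rNames
  | .subEx r c d => insert r.base (c.rNames ∪ d.rNames)
  | .subAll c r d => insert r.base (c.rNames ∪ d.rNames)
  | .subToEx c r d => insert r.base (c.rNames ∪ d.rNames)
  | .atMost1 c s d => insert s.base (c.rNames ∪ d.rNames)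
  | .atLeast c _ s d => insert s.base (c.rNames ∪ d.rNames)
  | .rIncl rs r => insert r.base {n | ∃ s ∈ rs, n = HRole.base s}
  | .rDisj s₁ s₂ => {s₁.base, s₂.base}

def rNamesH (O : Set HAx) : Set ℕ := {n | ∃ ax ∈ O, n ∈ HAx.rNames ax}
def cNamesH (O : Set HAx) : Set ℕ := {n | ∃ ax ∈ O, n ∈ HAx.cNames ax}

/-! ### Axiom shifting, oracle queries, `pos(O_K⁺)` -/

/-- Range and functionality axioms. -/
def isRF : PLAx → Prop
  | .funcRole _ => True
  | .funcProp _ => True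
  | .rangeAx _ _ => True
  | _ => False

/-- `K_O⁻`: the range and functionality axioms of `K`. -/
def Kminus (K : Set PLAx) : Set PLAx := {ax | ax ∈ K ∧ isRF ax}

/-- `K \ K_O⁻`: the inclusion and disjointness axioms of `K`, shifted to the oracle. -/
def Kshift (K : Set PLAx) : Set PLAx := {ax | ax ∈ K ∧ ¬ isRF ax}

/-- Satisfaction of `O_K⁺ = O ∪ (K \ K_O⁻)`. -/
def satOplus (I : Interp) (K : Set PLAx) (O : Set HAx) : Prop :=
  I.satHKB O ∧ I.satKB (Kshift K)

/-- An oracle query `A₁ ⊓ … ⊓ A_m ⊑ A_{m+1} ⊔ … ⊔ Aₙ` (right-hand side `⊥` when empty). -/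
structure OQuery : Type where
  lhs : List ℕ
  rhs : List ℕ

def Interp.satQ (I : Interp) (q : OQuery) : Prop :=
  {d | ∀ a ∈ q.lhs, d ∈ I.conc a} ⊆ {d | ∃ b ∈ q.rhs, d ∈ I.conc b}

/-- The concept names of `sig(O_K⁺)`. -/
def cNamesOplus (K : Set PLAx) (O : Set HAx) : Set ℕ :=
  cNamesH O ∪ cNamesPL (Kshift K)

/-- `pos(O_K⁺)`: the oracle queries over `sig(O_K⁺) ∩ N_C` entailed by `O_K⁺`. -/
def posOplus (K : Set PLAx) (O : Set HAx) : Set OQuery :=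
  {q | (∀ a ∈ q.lhs, a ∈ cNamesOplus K O) ∧ (∀ b ∈ q.rhs, b ∈ cNamesOplus K O) ∧
     ∀ I : Interp, satOplus I K O → I.satQ q}

/-- `K ∪ O ⊨ C ⊑ D`. -/
def EntailsKO (K : Set PLAx) (O : Set HAx) (C D : PLC) : Prop :=
  ∀ I : Interp, I.satKB K → I.satHKB O → semL I C ⊆ semL I D

/-- `K_O⁻ ∪ pos(O_K⁺) ⊨ C ⊑ D`. -/
def EntailsShift (K : Set PLAx) (O : Set HAx) (C D : PLC) : Prop :=
  ∀ I : Interp, I.satKB (Kminus K) → (∀ q ∈ posOplus K O, I.satQ q) →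
    semL I C ⊆ semL I D

/-- `O_K⁺ ⊨ A₁ ⊓ … ⊓ Aₙ ⊑ ⊥`. -/
def OplusRefutes (K : Set PLAx) (O : Set HAx) (as : List ℕ) : Prop :=
  ∀ I : Interp, satOplus I K O → ∀ d : I.Δ, ¬ ∀ a ∈ as, d ∈ I.conc a

/-- One application of one of the seven oracle normalization rules (Table 4). -/
inductive RwO (K : Set PLAx) (O : Set HAx) : SPL → SPL → Prop
  /-- rule 1: `⊥ ⊓ D ⇝ ⊥` -/
  | botConj (C : SPL) :
      SPL.bot ∈ C.conj → C ≠ SPL.bot → RwO K O C SPL.bot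
  /-- rule 2 -/
  | exBot (r : ℕ) : RwO K O (SPL.ex r SPL.bot) SPL.bot
  /-- rule 3 -/
  | emptyIval (f : ℕ) (l u : ℤ) : u < l → RwO K O (SPL.ival f l u) SPL.bot
  /-- rule 4 -/
  | funcRole (C C' : SPL) (r : ℕ) (D D' : SPL) (rest : Multiset SPL) :
      PLAx.funcRole r ∈ Kminus K →
      C.conj = {SPL.ex r D, SPL.ex r D'} + rest →
      C'.conj = {SPL.ex r (SPL.inter D D')} + rest →
      RwO K O C C'
  /-- rule 5 (unconditional) -/
  | funcProp (C C' : SPL) (f : ℕ) (l₁ u₁ l₂ u₂ : ℤ) (rest : Multiset SPL) :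
      C.conj = {SPL.ival f l₁ u₁, SPL.ival f l₂ u₂} + rest →
      C'.conj = {SPL.ival f (max l₁ l₂) (min u₁ u₂)} + rest →
      RwO K O C C'
  /-- rule 6 -/
  | rangeRule (C C' : SPL) (r a : ℕ) (D : SPL) (rest : Multiset SPL) :
      PLAx.rangeAx r a ∈ Kminus K →
      SPL.atom a ∉ D.conj → SPL.bot ∉ D.conj →
      C.conj = {SPL.ex r D} + rest →
      C'.conj = {SPL.ex r (SPL.inter D (SPL.atom a))} + rest →
      RwO K O C C'
  /-- rule 7: `A₁ ⊓ … ⊓ Aₙ ⊓ D ⇝ ⊥` if `O_K⁺ ⊨ A₁ ⊓ … ⊓ Aₙ ⊑ ⊥` -/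
  | atomsBot (C : SPL) (as : List ℕ) :
      as ≠ [] → (∀ a ∈ as, SPL.atom a ∈ C.conj) → OplusRefutes K O as →
      RwO K O C SPL.bot
  /-- congruence: inside existential restrictions -/
  | exCongr (r : ℕ) (c c' : SPL) : RwO K O c c' → RwO K O (SPL.ex r c) (SPL.ex r c')
  /-- congruence: on one conjunct -/
  | interCongr (C C' c c' : SPL) (rest : Multiset SPL) :
      RwO K O c c' →
      C.conj = {c} + rest → C'.conj = {c'} + rest →
      RwO K O C C'

/-- `C` is normalized w.r.t. `K` and `O`. -/
def NormalizedO (K : Set PLAx) (O : Set HAx) (C : SPL) : Prop := ¬ ∃ C', RwO K O C C'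

/-! ### The canonical model of a normalized simple concept -/

/-- The top-level existential restrictions of a simple concept, in syntactic order. -/
def SPL.exList : SPL → List (ℕ × SPL)
  | .ex r c => [(r, c)]
  | .inter c d => c.exList ++ d.exList
  | _ => []

/-- The top-level concept names of a simple concept. -/
def SPL.atomList : SPL → List ℕ
  | .atom a => [a]
  | .inter c d => c.atomList ++ d.atomList
  | _ => []

/-- The top-level interval constraints of a simple concept. -/
def SPL.ivalList : SPL → List (ℕ × ℤ × ℤ)
  | .ival f l u => [(f, l, u)]
  | .inter c d => c.ivalList ++ d.ivalList
  | _ => []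

/-- The subconcept of `C` reached by following a path of indices into the
    nested top-level existential restrictions. -/
def subAt : List ℕ → SPL → Option SPL
  | [], C => some C
  | i :: p, C =>
    match C.exList[i]? with
    | some rc => subAt p rc.2
    | none => none

/-- The canonical model of a simple concept `C` w.r.t. `K` and `O` (Definition 18):
    its domain is the tree of nested existential restrictions of `C`. -/
def canonInterp (K : Set PLAx) (O : Set HAx) (C : SPL) : Interp where
  Δ := {p : List ℕ // (subAt p C).isSome}
  nonempty := ⟨⟨[], by simp [subAt]⟩⟩
  conc := fun a => {p | ∃ C', subAt p.1 C = some C' ∧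
    (OQuery.mk C'.atomList [a]) ∈ posOplus K O}
  role := fun r => {pq | ∃ (C' : SPL) (i : ℕ) (rc : ℕ × SPL),
    subAt pq.1.1 C = some C' ∧ C'.exList[i]? = some rc ∧ rc.1 = r ∧
    pq.2.1 = pq.1.1 ++ [i]}
  cprop := fun f => {pi | ∃ (C' : SPL) (l : ℤ),
    subAt pi.1.1 C = some C' ∧ (f, l, pi.2) ∈ C'.ivalList}

/-- The distinguished point `d` of the canonical model. -/
def canonRoot (K : Set PLAx) (O : Set HAx) (C : SPL) : (canonInterp K O C).Δ :=
  ⟨[], by simp [subAt]⟩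

/-! ### The oracle structural subsumption algorithm and `PLR^O` -/

/-- `STS^O` (Algorithm 3), with the oracle `O_K⁺`. -/
inductive STSO (K : Set PLAx) (O : Set HAx) : SPL → SPL → Prop
  | botCase (D : SPL) : STSO K O SPL.bot D
  | atomCase (C : SPL) (a : ℕ) :
      (OQuery.mk C.atomList [a]) ∈ posOplus K O → STSO K O C (SPL.atom a)
  | ivalCase (C : SPL) (f : ℕ) (l u l' u' : ℤ) :
      SPL.ival f l' u' ∈ C.conj → l ≤ l' → u' ≤ u → STSO K O C (SPL.ival f l u)
  | exCase (C C' D' : SPL) (r : ℕ) :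
      SPL.ex r C' ∈ C.conj → STSO K O C' D' → STSO K O C (SPL.ex r D')
  | interCase (C D' D'' : SPL) :
      STSO K O C D' → STSO K O C D'' → STSO K O C (SPL.inter D' D'')

def RwOL (K : Set PLAx) (O : Set HAx) (C C' : PLC) : Prop :=
  List.Forall₂ (Relation.ReflTransGen (RwO K O)) C C'

/-- `PLR^O(K, C ⊑ D) = true` (Algorithm 4). -/
def PLROaccept (K : Set PLAx) (O : Set HAx) (C D : PLC) : Prop :=
  ∃ C' : PLC, RwOL K O C C' ∧ (∀ c ∈ C', NormalizedO K O c) ∧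
    ∀ c ∈ splitL C' D, ∃ d ∈ D, STSO K O c d

/-! ### Single-atom form and oracle compilation -/

/-- Auxiliary predicate: every conjunct is a concept name, an interval constraint,
    or an existential restriction whose filler is in single-atom form. -/
def SAaux : SPL → Prop
  | .atom _ => True
  | .bot => False
  | .ival _ _ _ => True
  | .ex _ c => SAaux c ∧ c.atomList.length ≤ 1
  | .inter c d => SAaux c ∧ SAaux d

/-- A simple concept in single-atom form. -/
def SingleAtomS (C : SPL) : Prop := SAaux C ∧ C.atomList.length ≤ 1

/-- A full concept in single-atom form. -/
def SingleAtomL (C : PLC) : Prop := ∀ c ∈ C, SingleAtomS c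

/-- `comp(K, O) = K_O⁻ ∪ { A ⊑ B : (A ⊑ B) ∈ pos(O_K⁺) }`. -/
def compKB (K : Set PLAx) (O : Set HAx) : Set PLAx :=
  Kminus K ∪ {ax | ∃ a b : ℕ, ax = PLAx.incl a b ∧ (OQuery.mk [a] [b]) ∈ posOplus K O}

/-- A definition `B ≡ A₁ ⊓ … ⊓ Aₙ` (expressible in both EL and DL-lite_horn). -/
abbrev CDef := ℕ × List ℕ

def Interp.satDef (I : Interp) (df : CDef) : Prop :=
  I.conc df.1 = {d | ∀ a ∈ df.2, d ∈ I.conc a}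

/-- `K ∪ O ∪ O* ⊨ C ⊑ D`, where `O*` is a list of definitions. -/
def EntailsKODefs (K : Set PLAx) (O : Set HAx) (defs : List CDef) (C D : PLC) : Prop :=
  ∀ I : Interp, I.satKB K → I.satHKB O → (∀ df ∈ defs, I.satDef df) →
    semL I C ⊆ semL I D

def defsSize (defs : List CDef) : ℕ := (defs.map fun p => p.2.length + 1).sum

end PLPaper

/-! The canonical model is a tree in which the subtree below the `i`-th top-level existential
restriction `∃R.C'` of `C` is the canonical model of `C'`, so `STS^O(C ⊑ D)` and `d ∈ D^I` unfold
in the same way along the structure of `D`. For concept names both sides ask the same query of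
`pos(O_K⁺)`. For an interval `∃f.[l,u]` normalization makes every interval `[l',u']` of `C`
nonempty, and interval safety turns "`[l',u']` meets `[l,u]`" into "`[l',u'] ⊆ [l,u]`". -/

namespace PLPaper

namespace SPL

theorem conj_eq_singleton_of_mem {C x : SPL} (h : x ∈ C.conj) : x.conj = {x} := by
  induction C with
  | inter c d ihc ihd => exact (Multiset.mem_add.1 h).elim ihc ihd
  | _ => simp only [conj, Multiset.mem_singleton] at h; subst h; rfl

theorem conj_foldr_inter (c : SPL) (l : List SPL) (hl : ∀ x ∈ l, x.conj = {x}) :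
    (l.foldr inter c).conj = ↑l + c.conj := by
  induction l with
  | nil => simp
  | cons x l ih =>
    rw [List.foldr_cons, conj, hl x List.mem_cons_self,
      ih fun y hy => hl y (List.mem_cons_of_mem x hy), ← Multiset.cons_coe, Multiset.singleton_add, Multiset.cons_add]

theorem mem_conj_ival_iff {C : SPL} {f : ℕ} {l u : ℤ} :
    ival f l u ∈ C.conj ↔ (f, l, u) ∈ C.ivalList := by
  induction C with
  | inter c d ihc ihd => simp [conj, ivalList, ihc, ihd]
  | _ => simp [conj, ivalList]

theorem mem_conj_ex_iff {C : SPL} {r : ℕ} {c : SPL} :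
    ex r c ∈ C.conj ↔ (r, c) ∈ C.exList := by
  induction C with
  | inter c d ihc ihd => simp [conj, exList, ihc, ihd]
  | _ => simp [conj, exList]

theorem ivalList_subset_ivalsOf (C : SPL) : C.ivalList ⊆ C.ivalsOf := by
  induction C with
  | inter c d ihc ihd =>
    exact List.append_subset.2
      ⟨List.subset_append_of_subset_left _ ihc, List.subset_append_of_subset_right _ ihd⟩
  | _ => simp [ivalList, ivalsOf]

theorem ivalsOf_subset_of_mem_exList {C c : SPL} {r : ℕ} (h : (r, c) ∈ C.exList) :
    c.ivalsOf ⊆ C.ivalsOf := by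
  induction C with
  | inter d e ihd ihe =>
    rcases List.mem_append.1 h with h | h
    · exact List.subset_append_of_subset_left _ (ihd h)
    · exact List.subset_append_of_subset_right _ (ihe h)
  | ex r' c' =>
    obtain ⟨-, rfl⟩ := Prod.mk.inj (List.mem_singleton.1 h)
    exact List.Subset.refl _
  | _ => simp [exList] at h

end SPL

@[simp]
theorem ivalsL_singleton (C : SPL) : ivalsL [C] = C.ivalsOf := by
  simp [ivalsL]

theorem IntervalSafe.mono {C D C' D' : SPL} (h : IntervalSafe [C] [D])
    (hC : C'.ivalsOf ⊆ C.ivalsOf) (hD : D'.ivalsOf ⊆ D.ivalsOf) :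
    IntervalSafe [C'] [D'] := by
  simp only [IntervalSafe, ivalsL_singleton] at h ⊢
  exact fun p hp q hq => h p (hC hp) q (hD hq)

section Normalization

variable {K : Set PLAx} {O : Set HAx} {C : SPL}

theorem not_normalizedO_of_mem_conj {c c' : SPL} (hc : c ∈ C.conj) (hc' : c'.conj = {c'})
    (h : RwO K O c c') : ¬ NormalizedO K O C := by
  let rest := C.conj.erase c
  have hrest : (rest.toList.foldr SPL.inter c').conj = {c'} + rest := by
    rw [SPL.conj_foldr_inter c' _ fun x hx =>
      SPL.conj_eq_singleton_of_mem (Multiset.mem_of_mem_erase (Multiset.mem_toList.1 hx)),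
      hc', Multiset.coe_toList, add_comm]
  exact fun hn => hn ⟨_, RwO.interCongr C _ c c' rest h
    (by rw [Multiset.singleton_add, Multiset.cons_erase hc]) hrest⟩

theorem NormalizedO.le_of_mem_ivalList (hn : NormalizedO K O C) {f : ℕ} {l u : ℤ}
    (h : (f, l, u) ∈ C.ivalList) : l ≤ u := by
  by_contra! hlt
  exact not_normalizedO_of_mem_conj (SPL.mem_conj_ival_iff.2 h) rfl (RwO.emptyIval f l u hlt) hn

theorem NormalizedO.ne_bot_of_mem_exList (hn : NormalizedO K O C) {r : ℕ} {c : SPL}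
    (h : (r, c) ∈ C.exList) : c ≠ SPL.bot := by
  rintro rfl
  exact not_normalizedO_of_mem_conj (SPL.mem_conj_ex_iff.2 h) rfl (RwO.exBot r) hn

theorem NormalizedO.of_mem_exList (hn : NormalizedO K O C) {r : ℕ} {c : SPL}
    (h : (r, c) ∈ C.exList) : NormalizedO K O c := by
  rintro ⟨c', hc'⟩
  exact not_normalizedO_of_mem_conj (SPL.mem_conj_ex_iff.2 h) rfl (RwO.exCongr r c c' hc') hn

end Normalization

section CanonicalModel

variable {K : Set PLAx} {O : Set HAx}

theorem subAt_append (p q : List ℕ) (C : SPL) :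
    subAt (p ++ q) C = (subAt p C).bind (subAt q) := by
  induction p generalizing C with
  | nil => rfl
  | cons i p ih =>
    simp only [List.cons_append, subAt]
    cases C.exList[i]? with
    | none => rfl
    | some rc => exact ih rc.2

theorem mem_sem_canonInterp_iff_of_subAt {C c : SPL} {p : List ℕ} (hp : subAt p C = some c)
    (E : SPL) {x : (canonInterp K O C).Δ} {y : (canonInterp K O c).Δ} (hxy : x.1 = p ++ y.1) :
    x ∈ E.sem (canonInterp K O C) ↔ y ∈ E.sem (canonInterp K O c) := by
  have hsub : ∀ q, subAt (p ++ q) C = subAt q c := fun q => by rw [subAt_append, hp]; rfl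
  have hsub' : ∀ {x : (canonInterp K O C).Δ} {y : (canonInterp K O c).Δ},
      x.1 = p ++ y.1 → subAt x.1 C = subAt y.1 c := fun hxy => by rw [hxy, hsub]
  induction E generalizing x y with
  | atom a =>
    change (∃ X, _ ∧ _) ↔ (∃ X, _ ∧ _)
    rw [hsub' hxy]
  | bot => exact Iff.rfl
  | ival f l u =>
    change (∃ i, l ≤ i ∧ i ≤ u ∧ ∃ X l', _ ∧ _) ↔ (∃ i, l ≤ i ∧ i ≤ u ∧ ∃ X l', _ ∧ _)
    simp only [hsub' hxy]
  | ex r E ih =>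
    constructor
    · rintro ⟨x', ⟨X, i, rc, hX, hi, hr, hx'⟩, hE⟩
      have hx'y : x'.1 = p ++ (y.1 ++ [i]) := by rw [hx', hxy, List.append_assoc]
      have hy' : (subAt (y.1 ++ [i]) c).isSome := by rw [← hsub, ← hx'y]; exact x'.2
      exact ⟨⟨_, hy'⟩, ⟨X, i, rc, hsub' hxy ▸ hX, hi, hr, rfl⟩, (ih hx'y).1 hE⟩
    · rintro ⟨y', ⟨X, i, rc, hX, hi, hr, hy'⟩, hE⟩
      have hxy'' : x.1 ++ [i] = p ++ y'.1 := by rw [hy', hxy, List.append_assoc]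
      have hx' : (subAt (x.1 ++ [i]) C).isSome := by rw [hxy'', hsub]; exact y'.2
      exact ⟨⟨_, hx'⟩, ⟨X, i, rc, (hsub' hxy).symm ▸ hX, hi, hr, rfl⟩, (ih hxy'').2 hE⟩
  | inter E F ihE ihF => exact and_congr (ihE hxy) (ihF hxy)

variable {C : SPL}

theorem canonRoot_mem_sem_atom_iff {a : ℕ} :
    canonRoot K O C ∈ (SPL.atom a).sem (canonInterp K O C) ↔
      OQuery.mk C.atomList [a] ∈ posOplus K O := by
  constructor
  · rintro ⟨X, hX, h⟩
    obtain rfl := Option.some.inj hX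
    exact h
  · exact fun h => ⟨C, rfl, h⟩

theorem canonRoot_mem_sem_ival_iff {f : ℕ} {l u : ℤ} :
    canonRoot K O C ∈ (SPL.ival f l u).sem (canonInterp K O C) ↔
      ∃ l' i, (f, l', i) ∈ C.ivalList ∧ l ≤ i ∧ i ≤ u := by
  constructor
  · rintro ⟨i, hli, hiu, X, l', hX, h⟩
    obtain rfl := Option.some.inj hX
    exact ⟨l', i, h, hli, hiu⟩
  · rintro ⟨l', i, h, hli, hiu⟩
    exact ⟨i, hli, hiu, C, l', rfl, h⟩

theorem canonRoot_mem_sem_ex_iff {r : ℕ} {E : SPL} :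
    canonRoot K O C ∈ (SPL.ex r E).sem (canonInterp K O C) ↔
      ∃ c, (r, c) ∈ C.exList ∧ canonRoot K O c ∈ E.sem (canonInterp K O c) := by
  constructor
  · rintro ⟨x, ⟨X, i, rc, hX, hi, rfl, hx⟩, hE⟩
    obtain rfl := Option.some.inj hX
    have hsub : subAt [i] C = some rc.2 := by simp [subAt, hi]
    exact ⟨rc.2, List.mem_of_getElem? hi, (mem_sem_canonInterp_iff_of_subAt hsub E hx).1 hE⟩
  · rintro ⟨c, hc, hE⟩
    obtain ⟨i, hi⟩ := List.mem_iff_getElem?.1 hc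
    have hsub : subAt [i] C = some c := by simp [subAt, hi]
    exact ⟨⟨[i], by simp [hsub]⟩, ⟨C, i, (r, c), rfl, hi, rfl, rfl⟩,
      (mem_sem_canonInterp_iff_of_subAt hsub E rfl).2 hE⟩

end CanonicalModel

namespace STSO

variable {K : Set PLAx} {O : Set HAx} {C : SPL}

theorem not_bot (hC : C ≠ SPL.bot) : ¬ STSO K O C SPL.bot := by
  rintro ⟨⟩
  exact hC rfl

theorem atom_iff (hC : C ≠ SPL.bot) {a : ℕ} :
    STSO K O C (SPL.atom a) ↔ OQuery.mk C.atomList [a] ∈ posOplus K O := by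
  refine ⟨fun h => ?_, atomCase C a⟩
  cases h with
  | botCase => exact absurd rfl hC
  | atomCase _ _ h => exact h

theorem ival_iff (hC : C ≠ SPL.bot) {f : ℕ} {l u : ℤ} :
    STSO K O C (SPL.ival f l u) ↔ ∃ l' u', (f, l', u') ∈ C.ivalList ∧ l ≤ l' ∧ u' ≤ u := by
  constructor
  · intro h
    cases h with
    | botCase => exact absurd rfl hC
    | ivalCase _ _ _ _ l' u' h hl hu => exact ⟨l', u', SPL.mem_conj_ival_iff.1 h, hl, hu⟩
  · rintro ⟨l', u', h, hl, hu⟩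
    exact ivalCase C f l u l' u' (SPL.mem_conj_ival_iff.2 h) hl hu

theorem ex_iff (hC : C ≠ SPL.bot) {r : ℕ} {D : SPL} :
    STSO K O C (SPL.ex r D) ↔ ∃ c, (r, c) ∈ C.exList ∧ STSO K O c D := by
  constructor
  · intro h
    cases h with
    | botCase => exact absurd rfl hC
    | exCase _ c _ _ h hD => exact ⟨c, SPL.mem_conj_ex_iff.1 h, hD⟩
  · rintro ⟨c, h, hD⟩
    exact exCase C c D r (SPL.mem_conj_ex_iff.2 h) hD

theorem inter_iff {D D' : SPL} :
    STSO K O C (SPL.inter D D') ↔ STSO K O C D ∧ STSO K O C D' := by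
  constructor
  · intro h
    cases h with
    | botCase => exact ⟨botCase D, botCase D'⟩
    | interCase _ _ _ hD hD' => exact ⟨hD, hD'⟩
  · exact fun ⟨hD, hD'⟩ => interCase C D D' hD hD'

end STSO

theorem stso_iff_canonRoot_mem_sem {K : Set PLAx} {O : Set HAx} (D : SPL) {C : SPL}
    (hC : C ≠ SPL.bot) (hsafe : IntervalSafe [C] [D]) (hn : NormalizedO K O C) :
    STSO K O C D ↔ canonRoot K O C ∈ D.sem (canonInterp K O C) := by
  induction D generalizing C with
  | atom a => rw [STSO.atom_iff hC, canonRoot_mem_sem_atom_iff]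
  | bot => exact iff_of_false (STSO.not_bot hC) id
  | ival f l u =>
    rw [STSO.ival_iff hC, canonRoot_mem_sem_ival_iff]
    constructor
    · rintro ⟨l', u', h, hl, hu⟩
      exact ⟨l', u', h, hl.trans (hn.le_of_mem_ivalList h), hu⟩
    · rintro ⟨l', i, h, hli, hiu⟩
      have hl'i : l' ≤ i := hn.le_of_mem_ivalList h
      have hmeet : i ∈ Set.Icc l' i ∩ Set.Icc l u := ⟨⟨hl'i, le_rfl⟩, hli, hiu⟩
      rcases hsafe _ (by simpa using C.ivalList_subset_ivalsOf h) (f, l, u)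
        (by simp [SPL.ivalsOf]) with hsub | hdisj
      · exact ⟨l', i, h, (hsub ⟨le_rfl, hl'i⟩).1, hiu⟩
      · exact (Set.eq_empty_iff_forall_notMem.1 hdisj i hmeet).elim
  | ex r D ih =>
    rw [STSO.ex_iff hC, canonRoot_mem_sem_ex_iff]
    refine exists_congr fun c => and_congr_right fun hc => ih (hn.ne_bot_of_mem_exList hc)
      (hsafe.mono (SPL.ivalsOf_subset_of_mem_exList hc) (List.Subset.refl _))
      (hn.of_mem_exList hc)
  | inter D D' ih ih' =>
    rw [STSO.inter_iff]
    exact and_congr (ih hC (hsafe.mono (List.Subset.refl _) (List.subset_append_left _ _)) hn)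
      (ih' hC (hsafe.mono (List.Subset.refl _) (List.subset_append_right _ _)) hn)

theorem statement_12_general (K : Set PLAx) (O : Set HAx) (C D : SPL)
    (hCbot : C ≠ SPL.bot)
    (hsafe : IntervalSafe [C] [D])
    (hnorm : NormalizedO K O C) :
    STSO K O C D ↔ canonRoot K O C ∈ SPL.sem (canonInterp K O C) D :=
  stso_iff_canonRoot_mem_sem D hCbot hsafe hnorm

/-- if `C ⊑ D` is elementary w.r.t. `K` and `O`, `C ≠ ⊥`, and `(I, d)`
    is the canonical model of `C`, then `STS^{O_K⁺}(C ⊑ D) = true` iff `d ∈ D^I`. -/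
theorem statement_12 (K : Set PLAx) (O : Set HAx) (C D : SPL)
    (hK : K.Finite) (hO : O.Finite)
    (hsig : (rNamesPL K ∪ rNamesL [C] ∪ rNamesL [D]) ∩ rNamesH O = ∅)
    (hCbot : C ≠ SPL.bot)
    (hsafe : IntervalSafe [C] [D])
    (hnorm : NormalizedO K O C) :
    STSO K O C D ↔ canonRoot K O C ∈ SPL.sem (canonInterp K O C) D :=
  statement_12_general K O C D hCbot hsafe hnorm

end PLPaper
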